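/- arXiv:1501.05818 — 2 statements merged into one kernel-verified Lean document; each statement's English description precedes it below -/
import Mathlib

section
/- Let S be a sparse family of dyadic cubes in a dyadic grid on ℝ^d, meaning that for each P ∈ S, the sum of |Q| over the maximal elements Q of S strictly contained in P is at most |P|/2. Then for each P ∈ S there exists a measurable subset E(P) ⊆ P with |E(P)| ≥ |P|/2 such that the sets {E(P) : P ∈ S} are pairwise disjoint. -/
open MeasureTheory

/-- The standard dyadic cube of generation `k` at position `m` in `ℝ^d`. -/
def dyadicCube (d : ℕ) (k : ℤ) (m : Fin d → ℤ) : Set (Fin d → ℝ) :=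
  {x | ∀ i, (m i : ℝ) * (2 : ℝ) ^ (-k) ≤ x i ∧ x i < ((m i : ℝ) + 1) * (2 : ℝ) ^ (-k)}

/-- `Q` is a cube of the standard dyadic grid on `ℝ^d`. -/
def IsDyadicCube {d : ℕ} (Q : Set (Fin d → ℝ)) : Prop :=
  ∃ (k : ℤ) (m : Fin d → ℤ), Q = dyadicCube d k m

/-- The `S`-children of `P`: the maximal elements of `S` strictly contained in `P`. -/
def sparseChildren {α : Type*} (S : Set (Set α)) (P : Set α) : Set (Set α) :=
  {Q | Q ∈ S ∧ Q ⊂ P ∧ ∀ R ∈ S, Q ⊆ R → R ⊂ P → R = Q}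

/-- A family of dyadic cubes is sparse if for each `P ∈ S` the `S`-children of `P`
have total measure at most `|P|/2`. -/
def IsSparse {d : ℕ} (S : Set (Set (Fin d → ℝ))) : Prop :=
  ∀ P ∈ S, ∑' Q : sparseChildren S P, volume (Q : Set (Fin d → ℝ)) ≤ volume P / 2

/-!
Take `E(P) := P \ ⋃₀ (S-children of P)`; sparseness bounds the removed part by `|P|/2`.
Two distinct cubes of `S` that meet are nested, say `Q ⊊ P`. The generations of the cubes of `S`
containing `Q` and strictly inside `P` exceed that of `P`, so one of least generation exists, and
it is an `S`-child of `P` containing `Q`. Hence `E(P)` misses `Q ⊇ E(Q)`.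
-/

lemma Int.floor_mul_two_zpow_eq_ediv {K : Type*} [Field K] [LinearOrder K]
    [IsStrictOrderedRing K] [FloorRing K] (x : K) (k : ℤ) (j : ℕ) :
    ⌊x * 2 ^ k⌋ = ⌊x * 2 ^ (k + j)⌋ / 2 ^ j := by
  have h2j : (2 : ℤ) ^ j = ((2 ^ j : ℕ) : ℤ) := by push_cast; rfl
  rw [h2j, ← Int.floor_div_natCast, zpow_add₀ two_ne_zero, zpow_natCast]
  push_cast
  field_simp

section SparseChildren

variable {α : Type*} {S : Set (Set α)} {P Q : Set α}

lemma exists_mem_sparseChildren_superset (gen : Set α → ℤ)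
    (hgen : ∀ Q ∈ S, ∀ R ∈ S, Q ⊂ R → gen R < gen Q) (hP : P ∈ S) (hQ : Q ∈ S)
    (hQP : Q ⊂ P) :
    ∃ R ∈ sparseChildren S P, Q ⊆ R := by
  obtain ⟨k, ⟨R, ⟨hR, hQR, hRP⟩, rfl⟩, hleast⟩ := Int.exists_least_of_bdd
    (P := fun k => ∃ R, (R ∈ S ∧ Q ⊆ R ∧ R ⊂ P) ∧ gen R = k)
    ⟨gen P + 1, fun _ ⟨R, ⟨hR, _, hRP⟩, hk⟩ => by have := hgen R hR P hP hRP; omega⟩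
    ⟨gen Q, Q, ⟨hQ, subset_rfl, hQP⟩, rfl⟩
  refine ⟨R, ⟨hR, hRP, fun R' hR' hRR' hR'P => ?_⟩, hQR⟩
  by_contra hne
  exact (hgen R hR R' hR' (hRR'.ssubset_of_ne (Ne.symm hne))).not_ge
    (hleast _ ⟨R', ⟨hR', hQR.trans hRR', hR'P⟩, rfl⟩)

lemma disjoint_sdiff_sUnion_sparseChildren
    (hnest : ∀ P ∈ S, ∀ Q ∈ S, ¬Disjoint P Q → P ⊆ Q ∨ Q ⊆ P)
    (hchild : ∀ P ∈ S, ∀ Q ∈ S, Q ⊂ P → ∃ R ∈ sparseChildren S P, Q ⊆ R)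
    (hP : P ∈ S) (hQ : Q ∈ S) (hPQ : P ≠ Q) :
    Disjoint (P \ ⋃₀ sparseChildren S P) (Q \ ⋃₀ sparseChildren S Q) := by
  have disjoint_of_ssubset : ∀ {P Q}, P ∈ S → Q ∈ S → Q ⊂ P →
      Disjoint Q (P \ ⋃₀ sparseChildren S P) := by
    intro P Q hP hQ hQP
    obtain ⟨R, hR, hQR⟩ := hchild P hP Q hQ hQP
    exact Set.disjoint_left.2 fun x hxQ hxP => hxP.2 ⟨R, hR, hQR hxQ⟩
  by_contra h
  rcases hnest P hP Q hQ fun hd => h (hd.mono Set.sdiff_subset Set.sdiff_subset) with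
    hPQ' | hQP
  · exact h ((disjoint_of_ssubset hQ hP (hPQ'.ssubset_of_ne hPQ)).mono_left Set.sdiff_subset)
  · exact h ((disjoint_of_ssubset hP hQ (hQP.ssubset_of_ne hPQ.symm)).symm.mono_right
      Set.sdiff_subset)

end SparseChildren

lemma measure_half_le_sdiff_sUnion {α : Type*} [MeasurableSpace α] (μ : Measure α)
    {C : Set (Set α)} {P : Set α} (hC : C.Countable) (hP : μ P ≠ ⊤)
    (hsum : ∑' Q : C, μ Q ≤ μ P / 2) : μ P / 2 ≤ μ (P \ ⋃₀ C) := by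
  have hunion : μ (⋃₀ C) ≤ μ P / 2 := by
    have := hC.to_subtype
    rw [Set.sUnion_eq_iUnion]
    exact (measure_iUnion_le _).trans hsum
  calc μ P / 2 = μ P - μ P / 2 := (ENNReal.sub_half hP).symm
    _ ≤ μ P - μ (⋃₀ C) := tsub_le_tsub_left hunion _
    _ ≤ μ (P \ ⋃₀ C) := le_measure_sdiff

section DyadicCube

variable {d : ℕ}

lemma mem_dyadicCube_iff {k : ℤ} {m : Fin d → ℤ} {x : Fin d → ℝ} :
    x ∈ dyadicCube d k m ↔ ∀ i, ⌊x i * 2 ^ k⌋ = m i := by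
  have hk : (0 : ℝ) < 2 ^ k := zpow_pos two_pos k
  refine forall_congr' fun i => ?_
  rw [Int.floor_eq_iff, zpow_neg, ← div_eq_mul_inv, ← div_eq_mul_inv, div_le_iff₀ hk,
    lt_div_iff₀ hk]

lemma dyadicCube_nonempty (k : ℤ) (m : Fin d → ℤ) : (dyadicCube d k m).Nonempty :=
  ⟨fun i => m i * 2 ^ (-k), fun _ =>
    ⟨le_rfl, mul_lt_mul_of_pos_right (lt_add_one _) (zpow_pos two_pos _)⟩⟩

lemma dyadicCube_subset_of_le {k₁ k₂ : ℤ} {m₁ m₂ : Fin d → ℤ} (hk : k₂ ≤ k₁)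
    (hd : ¬Disjoint (dyadicCube d k₁ m₁) (dyadicCube d k₂ m₂)) :
    dyadicCube d k₁ m₁ ⊆ dyadicCube d k₂ m₂ := by
  obtain ⟨j, rfl⟩ := Int.le.dest hk
  obtain ⟨x, hx₁, hx₂⟩ := Set.not_disjoint_iff.1 hd
  intro y hy
  rw [mem_dyadicCube_iff] at hx₁ hx₂ hy ⊢
  intro i
  rw [Int.floor_mul_two_zpow_eq_ediv _ _ j, hy, ← hx₁, ← Int.floor_mul_two_zpow_eq_ediv,
    hx₂]

lemma lt_of_dyadicCube_ssubset {k₁ k₂ : ℤ} {m₁ m₂ : Fin d → ℤ}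
    (h : dyadicCube d k₁ m₁ ⊂ dyadicCube d k₂ m₂) : k₂ < k₁ := by
  by_contra! hk
  obtain ⟨x, hx⟩ := dyadicCube_nonempty k₁ m₁ (d := d)
  have hd : ¬Disjoint (dyadicCube d k₂ m₂) (dyadicCube d k₁ m₁) :=
    Set.not_disjoint_iff.2 ⟨x, h.1 hx, hx⟩
  exact h.2 (dyadicCube_subset_of_le hk hd)

lemma dyadicCube_eq_pi (k : ℤ) (m : Fin d → ℤ) :
    dyadicCube d k m =
      Set.univ.pi fun i => Set.Ico (m i * 2 ^ (-k) : ℝ) ((m i + 1) * 2 ^ (-k)) := by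
  ext x
  simp [dyadicCube, Set.mem_pi]

lemma countable_setOf_isDyadicCube : {Q : Set (Fin d → ℝ) | IsDyadicCube Q}.Countable :=
  (Set.countable_range fun p : ℤ × (Fin d → ℤ) => dyadicCube d p.1 p.2).mono
    (by rintro _ ⟨k, m, rfl⟩; exact ⟨(k, m), rfl⟩)

namespace IsDyadicCube

variable {Q R : Set (Fin d → ℝ)}

lemma measurableSet (hQ : IsDyadicCube Q) : MeasurableSet Q := by
  obtain ⟨k, m, rfl⟩ := hQ
  rw [dyadicCube_eq_pi]
  exact .univ_pi fun _ => measurableSet_Ico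

lemma volume_ne_top (hQ : IsDyadicCube Q) : volume Q ≠ ⊤ := by
  obtain ⟨k, m, rfl⟩ := hQ
  rw [dyadicCube_eq_pi, volume_pi_pi]
  exact ENNReal.prod_ne_top fun _ _ => by simp

lemma subset_or_subset_of_not_disjoint (hQ : IsDyadicCube Q) (hR : IsDyadicCube R)
    (hd : ¬Disjoint Q R) : Q ⊆ R ∨ R ⊆ Q := by
  obtain ⟨k₁, m₁, rfl⟩ := hQ
  obtain ⟨k₂, m₂, rfl⟩ := hR
  rcases le_total k₂ k₁ with hk | hk
  · exact .inl (dyadicCube_subset_of_le hk hd)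
  · exact .inr (dyadicCube_subset_of_le hk fun h => hd h.symm)

end IsDyadicCube

lemma exists_generation_strictAnti :
    ∃ gen : Set (Fin d → ℝ) → ℤ,
      ∀ Q R, IsDyadicCube Q → IsDyadicCube R → Q ⊂ R → gen R < gen Q := by
  classical
  refine ⟨fun Q => if h : IsDyadicCube Q then h.choose else 0, fun Q R hQ hR hQR => ?_⟩
  simp only [dif_pos hQ, dif_pos hR]
  obtain ⟨mQ, hQm⟩ := hQ.choose_spec
  obtain ⟨mR, hRm⟩ := hR.choose_spec
  rw [hQm, hRm] at hQR
  exact lt_of_dyadicCube_ssubset hQR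

end DyadicCube

/-- A sparse family of dyadic cubes admits pairwise disjoint measurable major
subsets `E(P) ⊆ P` with `|E(P)| ≥ |P|/2`. -/
theorem sparse_major_subsets {d : ℕ} (S : Set (Set (Fin d → ℝ)))
    (hdy : ∀ Q ∈ S, IsDyadicCube Q) (hS : IsSparse S) :
    ∃ E : Set (Fin d → ℝ) → Set (Fin d → ℝ),
      (∀ P ∈ S, E P ⊆ P ∧ MeasurableSet (E P) ∧ volume P / 2 ≤ volume (E P)) ∧
      (∀ P ∈ S, ∀ Q ∈ S, P ≠ Q → Disjoint (E P) (E Q)) := by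
  have hS_count : S.Countable := countable_setOf_isDyadicCube.mono hdy
  have hchildren_count : ∀ P, (sparseChildren S P).Countable := fun P =>
    hS_count.mono fun _ hQ => hQ.1
  obtain ⟨gen, hgen⟩ := exists_generation_strictAnti (d := d)
  refine ⟨fun P => P \ ⋃₀ sparseChildren S P, fun P hP => ⟨Set.sdiff_subset, ?_, ?_⟩,
    fun P hP Q hQ hPQ => ?_⟩
  · exact (hdy P hP).measurableSet.diff
      (.sUnion (hchildren_count P) fun Q hQ => (hdy Q hQ.1).measurableSet)
  · exact measure_half_le_sdiff_sUnion volume (hchildren_count P) (hdy P hP).volume_ne_top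
      (hS P hP)
  · refine disjoint_sdiff_sUnion_sparseChildren
      (fun P hP Q hQ => (hdy P hP).subset_or_subset_of_not_disjoint (hdy Q hQ))
      (fun P hP Q hQ => exists_mem_sparseChildren_superset gen ?_ hP hQ) hP hQ hPQ
    exact fun Q hQ R hR => hgen Q R (hdy Q hQ) (hdy R hR)
end

section
/- (Dyadic Carleson embedding / paraproduct boundedness.) Let 𝒬 be the tree of a filtered σ-finite measure space and let (b_Q)_{Q∈𝒬} satisfy Δ_Q b_Q = b_Q and the Carleson condition sup_P μ(P)^{-1} Σ_{Q ⊆ P} ‖b_Q‖_∞^2 μ(Q) ≤ 1. Then the paraproduct Πf = Σ_{Q∈𝒬} ⟨f⟩_Q b_Q is bounded on L^2(μ): ‖Πf‖_{L^2(μ)} ≤ C‖f‖_{L^2(μ)} for an absolute constant C. -/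
open MeasureTheory

/-- A filtered structure on a measure space: for each `n ∈ ℤ`, a countable partition
`part n` of `Ω` into measurable sets of finite positive measure, with `part (n+1)`
refining `part n`. -/
structure MartingaleGrid (Ω : Type*) [MeasurableSpace Ω] (μ : Measure Ω) where
  part : ℤ → Set (Set Ω)
  countable : ∀ n, (part n).Countable
  measurableSet : ∀ n, ∀ Q ∈ part n, MeasurableSet Q
  pos : ∀ n, ∀ Q ∈ part n, 0 < μ Q
  fin : ∀ n, ∀ Q ∈ part n, μ Q < ⊤
  disjoint : ∀ n, (part n).PairwiseDisjoint id
  cover : ∀ n, ⋃₀ part n = Set.univ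
  refines : ∀ n, ∀ Q ∈ part (n + 1), ∃ P ∈ part n, Q ⊆ P

variable {Ω : Type*} [MeasurableSpace Ω] {μ : MeasureTheory.Measure Ω}

/-- The tree `𝒬 = ⋃ₙ 𝒬ₙ` of all partition sets. -/
def MartingaleGrid.tree (G : MartingaleGrid Ω μ) : Set (Set Ω) :=
  ⋃ n : ℤ, G.part n

/-- The children of `P`: the maximal elements of the tree strictly contained in `P`. -/
def MartingaleGrid.children (G : MartingaleGrid Ω μ) (P : Set Ω) : Set (Set Ω) :=
  {Q | Q ∈ G.tree ∧ Q ⊂ P ∧ ∀ R ∈ G.tree, Q ⊆ R → R ⊂ P → R = Q}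

/-- The martingale difference `Δ_P f = Σ_{Q child of P} 1_Q (⟨f⟩_Q − ⟨f⟩_P)`. -/
noncomputable def MartingaleGrid.mdiff (G : MartingaleGrid Ω μ) (P : Set Ω)
    (f : Ω → ℝ) (x : Ω) : ℝ :=
  ∑' Q : G.children P,
    Set.indicator (Q : Set Ω)
      (fun _ => (⨍ y in (Q : Set Ω), f y ∂μ) - ⨍ y in P, f y ∂μ) x

/-!
Since `Δ_Q b_Q = b_Q`, each `b_Q` vanishes off `Q`, is constant on the children of `Q` and has
mean zero on `Q`; hence the `b_Q` are pairwise orthogonal and, for a finite family of cells,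
`‖Σ_Q ⟨f⟩_Q b_Q‖₂² = Σ_Q ⟨f⟩_Q² ‖b_Q‖₂² ≤ Σ_Q ‖b_Q‖_∞² μ(Q) ⟨|f|⟩_Q²`.
The superlevel sets of the maximal function `M f = sup_{Q ∋ x} ⟨|f|⟩_Q` are disjoint unions of
maximal cells, so by the layer-cake formula the Carleson condition bounds the last sum by
`‖M f‖₂²`, and the weak-type bound `t μ(M f > t) ≤ ∫_{M f > t} |f|` gives Doob's inequality
`‖M f‖₂ ≤ 2 ‖f‖₂`. Fatou's lemma passes from finite partial sums to the whole series.
-/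

open Set Filter
open scoped ENNReal

/-! ### Layer cake and `L²` norms -/

section LayerCake

variable {f : Ω → ℝ≥0∞}

theorem lintegral_eq_lintegral_meas_ofReal_lt (hf : Measurable f) (hf_top : ∀ x, f x ≠ ∞) :
    ∫⁻ x, f x ∂μ = ∫⁻ t in Ioi 0, μ {x | ENNReal.ofReal t < f x} := by
  have key := lintegral_eq_lintegral_meas_lt μ
    (Eventually.of_forall fun x => ENNReal.toReal_nonneg) hf.ennreal_toReal.aemeasurable
  simp only [ENNReal.ofReal_toReal (hf_top _)] at key
  rw [key]
  refine setLIntegral_congr_fun measurableSet_Ioi fun t ht => ?_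
  simp_rw [ENNReal.ofReal_lt_iff_lt_toReal (le_of_lt ht) (hf_top _)]

theorem lintegral_sq_eq_lintegral_meas_ofReal_lt_mul (hf : Measurable f)
    (hf_top : ∀ x, f x ≠ ∞) :
    ∫⁻ x, f x ^ 2 ∂μ =
      2 * ∫⁻ t in Ioi 0, μ {x | ENNReal.ofReal t < f x} * ENNReal.ofReal t := by
  have key := lintegral_rpow_eq_lintegral_meas_lt_mul μ
    (Eventually.of_forall fun x => ENNReal.toReal_nonneg) hf.ennreal_toReal.aemeasurable two_pos
  simp only [Real.rpow_two, ENNReal.ofReal_pow ENNReal.toReal_nonneg,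
    ENNReal.ofReal_toReal (hf_top _), ENNReal.ofReal_ofNat, show (2 : ℝ) - 1 = 1 by norm_num,
    Real.rpow_one] at key
  rw [key]
  congr 1
  refine setLIntegral_congr_fun measurableSet_Ioi fun t ht => ?_
  simp_rw [ENNReal.ofReal_lt_iff_lt_toReal (le_of_lt ht) (hf_top _)]

theorem volume_restrict_Ioi_setOf_ofReal_lt {c : ℝ≥0∞} (hc : c ≠ ∞) :
    volume.restrict (Ioi (0 : ℝ)) {t | ENNReal.ofReal t < c} = c := by
  rw [Measure.restrict_apply (measurableSet_lt ENNReal.measurable_ofReal measurable_const)]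
  have : {t | ENNReal.ofReal t < c} ∩ Ioi 0 = Ioo 0 c.toReal := by
    ext t
    simp only [mem_inter_iff, mem_ofPred_eq, mem_Ioi, mem_Ioo]
    constructor
    · rintro ⟨h, ht⟩
      exact ⟨ht, (ENNReal.ofReal_lt_iff_lt_toReal ht.le hc).1 h⟩
    · rintro ⟨ht, h⟩
      exact ⟨(ENNReal.ofReal_lt_iff_lt_toReal ht.le hc).2 h, ht⟩
  rw [this, Real.volume_Ioo, sub_zero, ENNReal.ofReal_toReal hc]

end LayerCake

theorem lintegral_mul_sq_le {f g : Ω → ℝ≥0∞} (hf : AEMeasurable f μ) (hg : AEMeasurable g μ) :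
    (∫⁻ x, f x * g x ∂μ) ^ 2 ≤ (∫⁻ x, f x ^ 2 ∂μ) * ∫⁻ x, g x ^ 2 ∂μ := by
  have h := ENNReal.lintegral_mul_le_Lp_mul_Lq μ Real.HolderConjugate.two_two hf hg
  simp only [Pi.mul_apply, ENNReal.rpow_two] at h
  calc (∫⁻ x, f x * g x ∂μ) ^ 2
      ≤ ((∫⁻ x, f x ^ 2 ∂μ) ^ (1 / 2 : ℝ) * (∫⁻ x, g x ^ 2 ∂μ) ^ (1 / 2 : ℝ)) ^ 2 := by
        gcongr
    _ = (∫⁻ x, f x ^ 2 ∂μ) * ∫⁻ x, g x ^ 2 ∂μ := by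
        rw [mul_pow, ← ENNReal.rpow_natCast, ← ENNReal.rpow_natCast, ← ENNReal.rpow_mul,
          ← ENNReal.rpow_mul]
        norm_num

theorem sq_eLpNorm_two_eq_lintegral {E : Type*} [NormedAddCommGroup E] (f : Ω → E) :
    eLpNorm f 2 μ ^ 2 = ∫⁻ x, ‖f x‖ₑ ^ 2 ∂μ := by
  simpa [ENNReal.rpow_two] using eLpNorm_nnreal_pow_eq_lintegral (f := f) (μ := μ) two_ne_zero

theorem sq_eLpNorm_two_le_of_eq_zero_off {E : Type*} [NormedAddCommGroup E] {f : Ω → E}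
    {s : Set Ω} (hs : MeasurableSet s) (hf : ∀ x ∉ s, f x = 0) :
    eLpNorm f 2 μ ^ 2 ≤ eLpNorm f ∞ μ ^ 2 * μ s := by
  rw [sq_eLpNorm_two_eq_lintegral, ← lintegral_indicator_const hs]
  refine lintegral_mono_ae ?_
  filter_upwards [enorm_ae_le_eLpNormEssSup f μ] with x hx
  by_cases hxs : x ∈ s
  · rw [indicator_of_mem hxs, eLpNorm_exponent_top]
    gcongr
  · simp [hf x hxs]

theorem MeasureTheory.MemLp.sq_eLpNorm_two_eq {f : Ω → ℝ} (hf : MemLp f 2 μ) :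
    eLpNorm f 2 μ ^ 2 = ENNReal.ofReal (∫ x, f x ^ 2 ∂μ) := by
  rw [sq_eLpNorm_two_eq_lintegral, ofReal_integral_eq_lintegral_ofReal hf.integrable_sq
    (Eventually.of_forall fun x => sq_nonneg _)]
  congr 1 with x
  rw [← ofReal_norm, ← ENNReal.ofReal_pow (norm_nonneg _), Real.norm_eq_abs, sq_abs]

theorem sq_eLpNorm_two_sum_of_orthogonal {ι : Type*} {s : Finset ι} {u : ι → Ω → ℝ}
    (hu : ∀ i ∈ s, MemLp (u i) 2 μ)
    (horth : ∀ i ∈ s, ∀ j ∈ s, i ≠ j → ∫ x, u i x * u j x ∂μ = 0) :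
    eLpNorm (fun x => ∑ i ∈ s, u i x) 2 μ ^ 2 = ∑ i ∈ s, eLpNorm (u i) 2 μ ^ 2 := by
  have hprod : ∀ i ∈ s, ∀ j ∈ s, Integrable (fun x => u i x * u j x) μ := fun i hi j hj =>
    (hu i hi).integrable_mul (hu j hj)
  rw [(memLp_finsetSum s hu).sq_eLpNorm_two_eq,
    Finset.sum_congr rfl fun i hi => (hu i hi).sq_eLpNorm_two_eq,
    ← ENNReal.ofReal_sum_of_nonneg fun i _ => integral_nonneg fun x => sq_nonneg _]
  congr 1
  simp_rw [sq, Finset.sum_mul_sum]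
  rw [integral_finsetSum _ fun i hi => integrable_finsetSum _ fun j hj => hprod i hi j hj]
  refine Finset.sum_congr rfl fun i hi => ?_
  rw [integral_finsetSum _ fun j hj => hprod i hi j hj,
    Finset.sum_eq_single_of_mem i hi fun j hj hji => horth i hi j hj hji.symm]

theorem enorm_setAverage_le {E : Type*} [NormedAddCommGroup E] [NormedSpace ℝ E] (f : Ω → E)
    (s : Set Ω) : ‖⨍ x in s, f x ∂μ‖ₑ ≤ ⨍⁻ x in s, ‖f x‖ₑ ∂μ :=
  enorm_integral_le_lintegral_enorm f

theorem eLpNorm_tsum_le_of_forall_finset {ι E : Type*} [Countable ι] [NormedAddCommGroup E]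
    {p : ℝ≥0∞} (hp : p ≠ ∞) {u : ι → Ω → E} (hu : ∀ i, AEStronglyMeasurable (u i) μ)
    {C : ℝ≥0∞} (hC : ∀ s : Finset ι, eLpNorm (fun x => ∑ i ∈ s, u i x) p μ ≤ C) :
    eLpNorm (fun x => ∑' i, u i x) p μ ≤ C := by
  rcases eq_or_ne p 0 with rfl | hp0
  · simp
  have hr : 0 < p.toReal := ENNReal.toReal_pos hp0 hp
  set S : Finset ι → Ω → ℝ≥0∞ := fun s x => ‖∑ i ∈ s, u i x‖ₑ ^ p.toReal
  -- where the series diverges its `tsum` is `0`; elsewhere the partial sums converge to it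
  have hpt : ∀ x, ‖∑' i, u i x‖ₑ ^ p.toReal ≤ liminf (fun s => S s x) atTop := by
    intro x
    by_cases hsum : Summable (u · x)
    · exact (((ENNReal.continuous_rpow_const.tendsto _).comp
        (continuous_enorm.tendsto _)).comp hsum.hasSum).liminf_eq.ge
    · simp [tsum_eq_zero_of_not_summable hsum, hr]
  have hS : ∀ s, ∫⁻ x, S s x ∂μ ≤ C ^ p.toReal := fun s => by
    rw [lintegral_rpow_enorm_eq_rpow_eLpNorm' hr, ← eLpNorm_eq_eLpNorm' hp0 hp]
    gcongr
    exact hC s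
  rw [eLpNorm_eq_lintegral_rpow_enorm_toReal hp0 hp]
  calc (∫⁻ x, ‖∑' i, u i x‖ₑ ^ p.toReal ∂μ) ^ (1 / p.toReal)
      ≤ (liminf (fun s => ∫⁻ x, S s x ∂μ) atTop) ^ (1 / p.toReal) := by
        gcongr
        exact (lintegral_mono hpt).trans (lintegral_liminf_le' fun s =>
          (Finset.aestronglyMeasurable_fun_sum s fun i _ => hu i).enorm.pow_const _)
    _ ≤ (C ^ p.toReal) ^ (1 / p.toReal) := by
        gcongr
        exact liminf_le_of_frequently_le' (Frequently.of_forall hS)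
    _ = C := by rw [← ENNReal.rpow_mul, mul_one_div_cancel hr.ne', ENNReal.rpow_one]

/-! ### Laminar families and the Carleson embedding -/

def IsLaminar {α : Type*} (𝒮 : Set (Set α)) : Prop :=
  ∀ P ∈ 𝒮, ∀ Q ∈ 𝒮, P ⊆ Q ∨ Q ⊆ P ∨ Disjoint P Q

namespace IsLaminar

theorem mono {α : Type*} {𝒮 𝒯 : Set (Set α)} (h𝒯 : IsLaminar 𝒯) (h : 𝒮 ⊆ 𝒯) : IsLaminar 𝒮 :=
  fun P hP Q hQ => h𝒯 P (h hP) Q (h hQ)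

theorem exists_pairwiseDisjoint_cover {α : Type*} {S : Finset (Set α)}
    (hS : IsLaminar (S : Set (Set α))) :
    ∃ T ⊆ S, (T : Set (Set α)).PairwiseDisjoint id ∧ ∀ Q ∈ S, ∃ M ∈ T, Q ⊆ M := by
  classical
  refine ⟨S.filter (Maximal (· ∈ S)), Finset.filter_subset _ _, ?_, fun Q hQ => ?_⟩
  · intro M hM M' hM' hne
    simp only [Finset.coe_filter, mem_ofPred_eq] at hM hM'
    rcases hS M hM.1 M' hM'.1 with h | h | h
    · exact absurd (hM.2.eq_of_subset hM'.2.prop h) hne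
    · exact absurd (hM'.2.eq_of_subset hM.2.prop h).symm hne
    · exact h
  · obtain ⟨M, hQM, hM⟩ := Finset.exists_le_maximal S hQ
    exact ⟨M, Finset.mem_filter.mpr ⟨hM.prop, hM⟩, hQM⟩

variable {F S : Finset (Set Ω)}

open scoped Classical in
theorem sum_le_measure_biUnion (hF : IsLaminar (F : Set (Set Ω))) (hSF : S ⊆ F)
    (hmeas : ∀ Q ∈ F, MeasurableSet Q) {a : Set Ω → ℝ≥0∞}
    (hpack : ∀ P ∈ F, ∑ Q ∈ F with Q ⊆ P, a Q ≤ μ P) :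
    ∑ Q ∈ S, a Q ≤ μ (⋃ Q ∈ S, Q) := by
  obtain ⟨T, hTS, hdisj, hcover⟩ :=
    (hF.mono (Finset.coe_subset.2 hSF)).exists_pairwiseDisjoint_cover
  choose! m hmT hQm using hcover
  calc ∑ Q ∈ S, a Q = ∑ M ∈ T, ∑ Q ∈ S with m Q = M, a Q :=
        (Finset.sum_fiberwise_of_maps_to hmT a).symm
    _ ≤ ∑ M ∈ T, ∑ Q ∈ F with Q ⊆ M, a Q := by
        refine Finset.sum_le_sum fun M _ => Finset.sum_le_sum_of_subset fun Q hQ => ?_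
        simp only [Finset.mem_filter] at hQ ⊢
        exact ⟨hSF hQ.1, hQ.2 ▸ hQm Q hQ.1⟩
    _ ≤ ∑ M ∈ T, μ M := Finset.sum_le_sum fun M hM => hpack M (hSF (hTS hM))
    _ = μ (⋃ M ∈ T, M) :=
        (measure_biUnion_finset hdisj fun M hM => hmeas M (hSF (hTS hM))).symm
    _ ≤ μ (⋃ Q ∈ S, Q) := measure_mono (biUnion_subset_biUnion_left (Finset.coe_subset.2 hTS))

theorem mul_measure_biUnion_le (hS : IsLaminar (S : Set (Set Ω)))
    (hmeas : ∀ Q ∈ S, MeasurableSet Q) {c : ℝ≥0∞} {g : Ω → ℝ≥0∞}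
    (h : ∀ Q ∈ S, c * μ Q ≤ ∫⁻ x in Q, g x ∂μ) :
    c * μ (⋃ Q ∈ S, Q) ≤ ∫⁻ x in ⋃ Q ∈ S, Q, g x ∂μ := by
  obtain ⟨T, hTS, hdisj, hcover⟩ := hS.exists_pairwiseDisjoint_cover
  have hunion : ⋃ Q ∈ S, Q = ⋃ M ∈ T, M := by
    refine subset_antisymm (iUnion₂_subset fun Q hQ => ?_)
      (biUnion_subset_biUnion_left (Finset.coe_subset.2 hTS))
    obtain ⟨M, hM, hQM⟩ := hcover Q hQ
    exact hQM.trans (subset_biUnion_of_mem (u := id) hM)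
  have hsplit := lintegral_biUnion_finset (μ := μ) hdisj (fun M hM => hmeas M (hTS hM)) g
  simp only [id] at hsplit
  rw [hunion, hsplit]
  calc c * μ (⋃ M ∈ T, M) ≤ c * ∑ M ∈ T, μ M := by
        gcongr
        exact measure_biUnion_finset_le T id
    _ = ∑ M ∈ T, c * μ M := Finset.mul_sum _ _ _
    _ ≤ ∑ M ∈ T, ∫⁻ x in M, g x ∂μ := Finset.sum_le_sum fun M hM => h M (hTS hM)

end IsLaminar

/-- For `φ Q = ⨍⁻ y in Q, g y ∂μ` this is the maximal function of `g` along `F`. -/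
noncomputable def supIndicator {α : Type*} (F : Finset (Set α)) (φ : Set α → ℝ≥0∞) :
    α → ℝ≥0∞ :=
  F.sup fun Q => Q.indicator fun _ => φ Q

section supIndicator

variable {α : Type*} {F : Finset (Set α)} {φ : Set α → ℝ≥0∞}

theorem lt_supIndicator_iff {x : α} {s : ℝ≥0∞} :
    s < supIndicator F φ x ↔ ∃ Q ∈ F, x ∈ Q ∧ s < φ Q := by
  rw [supIndicator, Finset.sup_apply, Finset.lt_sup_iff]
  refine exists_congr fun Q => and_congr_right fun _ => ?_
  by_cases hx : x ∈ Q <;> simp [hx]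

open scoped Classical in
theorem setOf_lt_supIndicator (s : ℝ≥0∞) :
    {x | s < supIndicator F φ x} = ⋃ Q ∈ F.filter (s < φ ·), Q := by
  ext x
  simp only [mem_ofPred_eq, lt_supIndicator_iff, mem_iUnion, Finset.mem_filter, exists_prop]
  tauto

theorem measurable_supIndicator [MeasurableSpace α] (hmeas : ∀ Q ∈ F, MeasurableSet Q) :
    Measurable (supIndicator F φ) := by
  classical
  refine measurable_of_Ioi fun s => ?_
  change MeasurableSet {x | s < supIndicator F φ x}
  rw [setOf_lt_supIndicator]
  exact Finset.measurableSet_biUnion _ fun Q hQ => hmeas Q (Finset.mem_filter.1 hQ).1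

theorem supIndicator_ne_top (hφ : ∀ Q ∈ F, φ Q ≠ ∞) (x : α) : supIndicator F φ x ≠ ∞ := by
  rw [supIndicator, Finset.sup_apply]
  refine ((Finset.sup_lt_iff bot_lt_top).2 fun Q hQ => ?_).ne
  by_cases hx : x ∈ Q <;> simp [hx, lt_top_iff_ne_top, hφ Q hQ]

theorem supIndicator_sq (x : α) :
    supIndicator F (fun Q => φ Q ^ 2) x = supIndicator F φ x ^ 2 := by
  rw [supIndicator, supIndicator, Finset.sup_apply, Finset.sup_apply,
    Finset.apply_sup_eq_sup_comp (· ^ 2) (fun a b => (pow_left_mono 2).map_max)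
      (zero_pow two_ne_zero)]
  congr 1 with Q
  by_cases hx : x ∈ Q <;> simp [hx]

end supIndicator

theorem lintegral_supIndicator_sq_ne_top {F : Finset (Set Ω)}
    (hmeas : ∀ Q ∈ F, MeasurableSet Q) (hfin : ∀ Q ∈ F, μ Q ≠ ∞) {φ : Set Ω → ℝ≥0∞}
    (hφ : ∀ Q ∈ F, φ Q ≠ ∞) :
    ∫⁻ x, supIndicator F φ x ^ 2 ∂μ ≠ ∞ := by
  have hle : ∀ x, supIndicator F φ x ^ 2 ≤ ∑ Q ∈ F, Q.indicator (fun _ => φ Q ^ 2) x := by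
    intro x
    rw [← supIndicator_sq, supIndicator, Finset.sup_apply]
    exact Finset.sup_le fun Q hQ => Finset.single_le_sum
      (f := fun Q => Q.indicator (fun _ => φ Q ^ 2) x) (fun _ _ => zero_le) hQ
  refine ne_top_of_le_ne_top ?_ (lintegral_mono hle)
  rw [lintegral_finsetSum' _ fun Q hQ => (measurable_const.indicator (hmeas Q hQ)).aemeasurable,
    Finset.sum_congr rfl fun Q hQ => lintegral_indicator_const (hmeas Q hQ) _]
  exact ENNReal.sum_ne_top.2 fun Q hQ =>
    ENNReal.mul_ne_top (ENNReal.pow_ne_top (hφ Q hQ)) (hfin Q hQ)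

namespace IsLaminar

variable {F : Finset (Set Ω)}

open scoped Classical in
theorem sum_mul_le_lintegral_supIndicator (hF : IsLaminar (F : Set (Set Ω)))
    (hmeas : ∀ Q ∈ F, MeasurableSet Q) {a φ : Set Ω → ℝ≥0∞}
    (hpack : ∀ P ∈ F, ∑ Q ∈ F with Q ⊆ P, a Q ≤ μ P) (hφ : ∀ Q ∈ F, φ Q ≠ ∞) :
    ∑ Q ∈ F, a Q * φ Q ≤ ∫⁻ x, supIndicator F φ x ∂μ := by
  have hlevel : ∀ c : ℝ≥0∞, MeasurableSet {t : ℝ | ENNReal.ofReal t < c} := fun c =>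
    measurableSet_lt ENNReal.measurable_ofReal measurable_const
  calc ∑ Q ∈ F, a Q * φ Q
      = ∑ Q ∈ F, ∫⁻ t in Ioi 0, {t | ENNReal.ofReal t < φ Q}.indicator (fun _ => a Q) t := by
        refine Finset.sum_congr rfl fun Q hQ => ?_
        rw [lintegral_indicator_const (hlevel _), volume_restrict_Ioi_setOf_ofReal_lt (hφ Q hQ)]
    _ = ∫⁻ t in Ioi 0, ∑ Q ∈ F with ENNReal.ofReal t < φ Q, a Q := by
        rw [← lintegral_finsetSum' _ fun Q _ =>
          (measurable_const.indicator (hlevel _)).aemeasurable]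
        simp_rw [Finset.sum_indicator_eq_sum_filter, mem_ofPred_eq]
    _ ≤ ∫⁻ t in Ioi 0, μ {x | ENNReal.ofReal t < supIndicator F φ x} := by
        refine lintegral_mono fun t => ?_
        rw [setOf_lt_supIndicator]
        exact hF.sum_le_measure_biUnion (Finset.filter_subset _ _) hmeas hpack
    _ = ∫⁻ x, supIndicator F φ x ∂μ :=
        (lintegral_eq_lintegral_meas_ofReal_lt (measurable_supIndicator hmeas)
          (supIndicator_ne_top hφ)).symm

theorem lintegral_supIndicator_laverage_sq_le (hF : IsLaminar (F : Set (Set Ω)))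
    (hmeas : ∀ Q ∈ F, MeasurableSet Q) (hfin : ∀ Q ∈ F, μ Q ≠ ∞) {g : Ω → ℝ≥0∞}
    (hg : AEMeasurable g μ) (hgQ : ∀ Q ∈ F, ∫⁻ x in Q, g x ∂μ ≠ ∞) :
    ∫⁻ x, supIndicator F (fun Q => ⨍⁻ y in Q, g y ∂μ) x ^ 2 ∂μ ≤ 4 * ∫⁻ x, g x ^ 2 ∂μ := by
  classical
  set M := supIndicator F fun Q => ⨍⁻ y in Q, g y ∂μ
  have hM : Measurable M := measurable_supIndicator hmeas
  have havg : ∀ Q ∈ F, ⨍⁻ y in Q, g y ∂μ ≠ ∞ := fun Q hQ => (setLAverage_lt_top (hgQ Q hQ)).ne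
  have hM_top : ∀ x, M x ≠ ∞ := supIndicator_ne_top havg
  have hweak (t : ℝ) : ENNReal.ofReal t * μ {x | ENNReal.ofReal t < M x}
      ≤ μ.withDensity g {x | ENNReal.ofReal t < M x} := by
    rw [withDensity_apply _ (measurableSet_lt measurable_const hM), setOf_lt_supIndicator]
    refine (hF.mono (Finset.coe_subset.2 (Finset.filter_subset _ _))).mul_measure_biUnion_le
      (fun Q hQ => hmeas Q (Finset.mem_filter.1 hQ).1) fun Q hQ => ?_
    rw [Finset.mem_filter, setLAverage_eq] at hQ
    exact ENNReal.mul_le_of_le_div hQ.2.le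
  set X := ∫⁻ x, M x ^ 2 ∂μ
  have hX : X ≤ 2 * ∫⁻ x, g x * M x ∂μ :=
    calc X = 2 * ∫⁻ t in Ioi 0, μ {x | ENNReal.ofReal t < M x} * ENNReal.ofReal t :=
          lintegral_sq_eq_lintegral_meas_ofReal_lt_mul hM hM_top
      _ ≤ 2 * ∫⁻ t in Ioi 0, μ.withDensity g {x | ENNReal.ofReal t < M x} := by
          gcongr with t
          rw [mul_comm]
          exact hweak t
      _ = 2 * ∫⁻ x, g x * M x ∂μ := by
          rw [← lintegral_eq_lintegral_meas_ofReal_lt hM hM_top,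
            lintegral_withDensity_eq_lintegral_mul₀ hg hM.aemeasurable]
          rfl
  have hX_top : X ≠ ∞ := lintegral_supIndicator_sq_ne_top hmeas hfin havg
  rcases eq_or_ne X 0 with hX0 | hX0
  · rw [hX0]
    exact zero_le
  refine (ENNReal.mul_le_mul_iff_left hX0 hX_top).1 ?_
  calc X * X ≤ (2 * ∫⁻ x, g x * M x ∂μ) ^ 2 := by
        rw [← sq]
        gcongr
    _ = 4 * (∫⁻ x, g x * M x ∂μ) ^ 2 := by
        rw [mul_pow]
        norm_num
    _ ≤ 4 * ((∫⁻ x, g x ^ 2 ∂μ) * X) := by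
        gcongr
        exact lintegral_mul_sq_le hg hM.aemeasurable
    _ = 4 * (∫⁻ x, g x ^ 2 ∂μ) * X := (mul_assoc _ _ _).symm

open scoped Classical in
theorem sum_mul_laverage_sq_le (hF : IsLaminar (F : Set (Set Ω)))
    (hmeas : ∀ Q ∈ F, MeasurableSet Q) (hfin : ∀ Q ∈ F, μ Q ≠ ∞) {a : Set Ω → ℝ≥0∞}
    (hpack : ∀ P ∈ F, ∑ Q ∈ F with Q ⊆ P, a Q ≤ μ P) {g : Ω → ℝ≥0∞} (hg : AEMeasurable g μ)
    (hgQ : ∀ Q ∈ F, ∫⁻ x in Q, g x ∂μ ≠ ∞) :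
    ∑ Q ∈ F, a Q * (⨍⁻ x in Q, g x ∂μ) ^ 2 ≤ 4 * ∫⁻ x, g x ^ 2 ∂μ :=
  calc ∑ Q ∈ F, a Q * (⨍⁻ x in Q, g x ∂μ) ^ 2
      ≤ ∫⁻ x, supIndicator F (fun Q => (⨍⁻ y in Q, g y ∂μ) ^ 2) x ∂μ :=
        hF.sum_mul_le_lintegral_supIndicator hmeas hpack fun Q hQ =>
          ENNReal.pow_ne_top (setLAverage_lt_top (hgQ Q hQ)).ne
    _ = ∫⁻ x, supIndicator F (fun Q => ⨍⁻ y in Q, g y ∂μ) x ^ 2 ∂μ := by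
        simp_rw [supIndicator_sq]
    _ ≤ 4 * ∫⁻ x, g x ^ 2 ∂μ := hF.lintegral_supIndicator_laverage_sq_le hmeas hfin hg hgQ

end IsLaminar

/-! ### The tree of a martingale grid and its martingale differences -/

namespace MartingaleGrid

section Tree

variable (G : MartingaleGrid Ω μ) {n m : ℤ} {P Q : Set Ω}

theorem mem_tree (hQ : Q ∈ G.part n) : Q ∈ G.tree := mem_iUnion_of_mem n hQ

theorem countable_tree : G.tree.Countable := countable_iUnion G.countable

theorem measurableSet_of_mem_tree (hQ : Q ∈ G.tree) : MeasurableSet Q := by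
  obtain ⟨n, hQ⟩ := mem_iUnion.1 hQ
  exact G.measurableSet n Q hQ

theorem measure_pos_of_mem_tree (hQ : Q ∈ G.tree) : 0 < μ Q := by
  obtain ⟨n, hQ⟩ := mem_iUnion.1 hQ
  exact G.pos n Q hQ

theorem measure_lt_top_of_mem_tree (hQ : Q ∈ G.tree) : μ Q < ∞ := by
  obtain ⟨n, hQ⟩ := mem_iUnion.1 hQ
  exact G.fin n Q hQ

theorem nonempty_of_mem_part (hQ : Q ∈ G.part n) : Q.Nonempty :=
  nonempty_of_measure_ne_zero (G.pos n Q hQ).ne'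

theorem exists_superset_of_le (hnm : n ≤ m) (hQ : Q ∈ G.part m) : ∃ P ∈ G.part n, Q ⊆ P := by
  induction m, hnm using Int.leInduction generalizing Q with
  | base => exact ⟨Q, hQ, subset_rfl⟩
  | succ m _ ih =>
    obtain ⟨R, hR, hQR⟩ := G.refines m Q hQ
    obtain ⟨P, hP, hRP⟩ := ih hR
    exact ⟨P, hP, hQR.trans hRP⟩

theorem subset_of_le_of_not_disjoint (hnm : n ≤ m) (hP : P ∈ G.part n) (hQ : Q ∈ G.part m)
    (h : ¬Disjoint P Q) : Q ⊆ P := by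
  obtain ⟨P', hP', hQP'⟩ := G.exists_superset_of_le hnm hQ
  obtain rfl : P = P' := (G.disjoint n).elim hP hP' fun hPP' => h (hPP'.mono_right hQP')
  exact hQP'

theorem isLaminar_tree : IsLaminar G.tree := by
  intro P hP Q hQ
  obtain ⟨n, hP⟩ := mem_iUnion.1 hP
  obtain ⟨m, hQ⟩ := mem_iUnion.1 hQ
  by_cases h : Disjoint P Q
  · exact Or.inr (Or.inr h)
  rcases le_total n m with hnm | hmn
  · exact Or.inr (Or.inl (G.subset_of_le_of_not_disjoint hnm hP hQ h))
  · exact Or.inl (G.subset_of_le_of_not_disjoint hmn hQ hP fun h' => h h'.symm)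

theorem lt_of_ssubset (hP : P ∈ G.part n) (hQ : Q ∈ G.part m) (hQP : Q ⊂ P) : n < m := by
  by_contra! hmn
  obtain ⟨x, hx⟩ := G.nonempty_of_mem_part hQ
  exact hQP.not_subset (G.subset_of_le_of_not_disjoint hmn hQ hP
    (not_disjoint_iff.2 ⟨x, hx, hQP.subset hx⟩))

theorem exists_mem_children_superset (hP : P ∈ G.tree) (hQ : Q ∈ G.tree) (hQP : Q ⊂ P) :
    ∃ R ∈ G.children P, Q ⊆ R := by
  obtain ⟨n, hPn⟩ := mem_iUnion.1 hP
  obtain ⟨m, hQm⟩ := mem_iUnion.1 hQ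
  -- the child is a cell between `Q` and `P` of least level
  obtain ⟨k, ⟨R, hRk, hQR, hRP⟩, hk⟩ :=
    Int.exists_least_of_bdd (P := fun k => ∃ R ∈ G.part k, Q ⊆ R ∧ R ⊂ P)
      ⟨n, fun k ⟨R, hRk, _, hRP⟩ => (G.lt_of_ssubset hPn hRk hRP).le⟩ ⟨m, Q, hQm, subset_rfl, hQP⟩
  refine ⟨R, ⟨G.mem_tree hRk, hRP, fun S hS hRS hSP => ?_⟩, hQR⟩
  obtain ⟨j, hSj⟩ := mem_iUnion.1 hS
  by_contra hne
  have := G.lt_of_ssubset hSj hRk (ssubset_of_subset_of_ne hRS (Ne.symm hne))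
  exact (hk j ⟨S, hSj, hQR.trans hRS, hSP⟩).not_gt this

end Tree

variable {G : MartingaleGrid Ω μ} {P Q R : Set Ω}

theorem disjoint_of_mem_children (hR : R ∈ G.children P) (hQ : Q ∈ G.children P)
    (hne : R ≠ Q) : Disjoint R Q := by
  rcases G.isLaminar_tree R hR.1 Q hQ.1 with h | h | h
  · exact absurd (hR.2.2 Q hQ.1 h hQ.2.1).symm hne
  · exact absurd (hQ.2.2 R hR.1 h hR.2.1) hne
  · exact h

section MartingaleDifference

variable {b b' : Ω → ℝ}

theorem eq_zero_of_mdiff_eq (hb : G.mdiff P b = b) {x : Ω} (hx : x ∉ P) : b x = 0 := by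
  rw [← hb, mdiff]
  exact (tsum_congr fun R => indicator_of_notMem (fun hxR => hx (R.2.2.1.subset hxR)) _).trans
    tsum_zero

theorem eq_of_mdiff_eq_of_mem_children (hb : G.mdiff P b = b) (hR : R ∈ G.children P) {x : Ω}
    (hx : x ∈ R) : b x = (⨍ y in R, b y ∂μ) - ⨍ y in P, b y ∂μ := by
  conv_lhs => rw [← hb]
  rw [mdiff, tsum_eq_single ⟨R, hR⟩ fun Q hQ => indicator_of_notMem (fun hxQ =>
    disjoint_left.1 (disjoint_of_mem_children Q.2 hR fun h => hQ (Subtype.ext h)) hxQ hx) _]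
  exact indicator_of_mem hx _

theorem exists_eqOn_of_mdiff_eq (hb : G.mdiff P b = b) (hP : P ∈ G.tree) (hQ : Q ∈ G.tree)
    (hQP : Q ⊂ P) : ∃ κ, ∀ x ∈ Q, b x = κ := by
  obtain ⟨R, hR, hQR⟩ := G.exists_mem_children_superset hP hQ hQP
  exact ⟨_, fun x hx => eq_of_mdiff_eq_of_mem_children hb hR (hQR hx)⟩

theorem setIntegral_eq_zero_of_mdiff_eq (hb : G.mdiff P b = b) (hP : P ∈ G.tree) :
    ∫ x in P, b x ∂μ = 0 := by
  rcases (G.children P).eq_empty_or_nonempty with hch | ⟨R, hR⟩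
  · have : IsEmpty (G.children P) := isEmpty_coe_sort.2 hch
    have hb0 : b = 0 := by
      rw [← hb]
      funext x
      exact tsum_empty
    simp [hb0]
  -- averaging `b = ⨍_R b - ⨍_P b` over a child `R` forces `⨍_P b = 0`
  set c := (⨍ y in R, b y ∂μ) - ⨍ y in P, b y ∂μ with hc
  have hRb : ⨍ y in R, b y ∂μ = c := by
    rw [setAverage_congr_fun (G.measurableSet_of_mem_tree hR.1) (Eventually.of_forall fun x hx =>
      eq_of_mdiff_eq_of_mem_children hb hR hx), setAverage_const
      (G.measure_pos_of_mem_tree hR.1).ne' (G.measure_lt_top_of_mem_tree hR.1).ne]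
  have havg : ⨍ y in P, b y ∂μ = 0 := by linarith
  rw [← measure_smul_setAverage _ (G.measure_lt_top_of_mem_tree hP).ne, havg, smul_zero]

theorem integral_mul_eq_zero_of_ssubset (hb : G.mdiff P b = b) (hb' : G.mdiff Q b' = b')
    (hP : P ∈ G.tree) (hQ : Q ∈ G.tree) (hQP : Q ⊂ P) : ∫ x, b x * b' x ∂μ = 0 := by
  obtain ⟨κ, hκ⟩ := exists_eqOn_of_mdiff_eq hb hP hQ hQP
  rw [← setIntegral_eq_integral_of_forall_compl_eq_zero fun x hx => by
      rw [eq_zero_of_mdiff_eq hb' hx, mul_zero],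
    setIntegral_congr_fun (G.measurableSet_of_mem_tree hQ) fun x hx => by rw [hκ x hx],
    integral_const_mul, setIntegral_eq_zero_of_mdiff_eq hb' hQ, mul_zero]

theorem integral_mul_eq_zero_of_ne (hb : G.mdiff P b = b) (hb' : G.mdiff Q b' = b')
    (hP : P ∈ G.tree) (hQ : Q ∈ G.tree) (hne : P ≠ Q) : ∫ x, b x * b' x ∂μ = 0 := by
  rcases G.isLaminar_tree P hP Q hQ with h | h | h
  · simp_rw [mul_comm (b _)]
    exact integral_mul_eq_zero_of_ssubset hb' hb hQ hP (h.ssubset_of_ne hne)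
  · exact integral_mul_eq_zero_of_ssubset hb hb' hP hQ (h.ssubset_of_ne hne.symm)
  · have : ∀ x, b x * b' x = 0 := fun x => by
      by_cases hx : x ∈ P
      · rw [eq_zero_of_mdiff_eq hb' (disjoint_left.1 h hx), mul_zero]
      · rw [eq_zero_of_mdiff_eq hb hx, zero_mul]
    simp [this]

end MartingaleDifference

def IsCarleson (G : MartingaleGrid Ω μ) (b : Set Ω → Ω → ℝ) : Prop :=
  ∀ P ∈ G.tree,
    ∑' Q : {Q | Q ∈ G.tree ∧ Q ⊆ P}, eLpNorm (b Q.1) ∞ μ ^ 2 * μ (Q.1 : Set Ω) ≤ μ P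

namespace IsCarleson

variable {b : Set Ω → Ω → ℝ} (hC : G.IsCarleson b)
include hC

open scoped Classical in
theorem sum_le {F : Finset (Set Ω)} (hF : ↑F ⊆ G.tree) (hP : P ∈ G.tree) :
    ∑ Q ∈ F with Q ⊆ P, eLpNorm (b Q) ∞ μ ^ 2 * μ Q ≤ μ P := by
  set w : Set Ω → ℝ≥0∞ := fun Q => eLpNorm (b Q) ∞ μ ^ 2 * μ Q
  calc ∑ Q ∈ F with Q ⊆ P, w Q = ∑ Q ∈ F, {Q | Q ∈ G.tree ∧ Q ⊆ P}.indicator w Q := by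
        rw [Finset.sum_indicator_eq_sum_filter]
        refine Finset.sum_congr (Finset.filter_congr fun Q hQ => ?_) fun _ _ => rfl
        simp [hF hQ]
    _ ≤ ∑' Q, {Q | Q ∈ G.tree ∧ Q ⊆ P}.indicator w Q := ENNReal.sum_le_tsum F
    _ = ∑' Q : {Q | Q ∈ G.tree ∧ Q ⊆ P}, w Q := (tsum_subtype _ w).symm
    _ ≤ μ P := hC P hP

theorem memLp_two (hQ : Q ∈ G.tree) (hb : AEStronglyMeasurable (b Q) μ)
    (hΔ : G.mdiff Q (b Q) = b Q) : MemLp (b Q) 2 μ := by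
  refine ⟨hb, lt_of_pow_lt_pow_left' 2 ?_⟩
  calc eLpNorm (b Q) 2 μ ^ 2 ≤ eLpNorm (b Q) ∞ μ ^ 2 * μ Q :=
        sq_eLpNorm_two_le_of_eq_zero_off (G.measurableSet_of_mem_tree hQ) fun x hx =>
          eq_zero_of_mdiff_eq hΔ hx
    _ ≤ μ Q := by
        have := hC.sum_le (F := {Q}) (by simpa) hQ
        rwa [Finset.filter_singleton, if_pos subset_rfl, Finset.sum_singleton] at this
    _ < ∞ := G.measure_lt_top_of_mem_tree hQ

theorem eLpNorm_sum_setAverage_mul_le (hb : ∀ Q ∈ G.tree, AEStronglyMeasurable (b Q) μ)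
    (hΔ : ∀ Q ∈ G.tree, G.mdiff Q (b Q) = b Q) {f : Ω → ℝ} (hf : MemLp f 2 μ)
    {F : Finset (Set Ω)} (hF : ↑F ⊆ G.tree) :
    eLpNorm (fun x => ∑ Q ∈ F, (⨍ y in Q, f y ∂μ) * b Q x) 2 μ ≤ 2 * eLpNorm f 2 μ := by
  have hbL2 : ∀ Q ∈ F, MemLp (b Q) 2 μ := fun Q hQ =>
    hC.memLp_two (hF hQ) (hb Q (hF hQ)) (hΔ Q (hF hQ))
  have horth : ∀ Q ∈ F, ∀ Q' ∈ F, Q ≠ Q' →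
      ∫ x, (⨍ y in Q, f y ∂μ) * b Q x * ((⨍ y in Q', f y ∂μ) * b Q' x) ∂μ = 0 := by
    intro Q hQ Q' hQ' hne
    rw [← mul_zero ((⨍ y in Q, f y ∂μ) * ⨍ y in Q', f y ∂μ), ← integral_mul_eq_zero_of_ne
      (hΔ Q (hF hQ)) (hΔ Q' (hF hQ')) (hF hQ) (hF hQ') hne, ← integral_const_mul]
    congr 1 with x
    ring
  have hfQ : ∀ Q ∈ F, ∫⁻ x in Q, ‖f x‖ₑ ∂μ ≠ ∞ := fun Q hQ => by
    have : Fact (μ Q < ∞) := ⟨G.measure_lt_top_of_mem_tree (hF hQ)⟩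
    exact ((hf.restrict Q).integrable one_le_two).hasFiniteIntegral.ne
  refine (ENNReal.pow_le_pow_left_iff two_ne_zero).1 ?_
  calc eLpNorm (fun x => ∑ Q ∈ F, (⨍ y in Q, f y ∂μ) * b Q x) 2 μ ^ 2
      = ∑ Q ∈ F, ‖⨍ y in Q, f y ∂μ‖ₑ ^ 2 * eLpNorm (b Q) 2 μ ^ 2 := by
        rw [sq_eLpNorm_two_sum_of_orthogonal (fun Q hQ => (hbL2 Q hQ).const_mul _) horth]
        refine Finset.sum_congr rfl fun Q _ => ?_
        rw [← mul_pow, ← eLpNorm_const_smul]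
        rfl
    _ ≤ ∑ Q ∈ F, eLpNorm (b Q) ∞ μ ^ 2 * μ Q * (⨍⁻ y in Q, ‖f y‖ₑ ∂μ) ^ 2 := by
        refine Finset.sum_le_sum fun Q hQ => ?_
        rw [mul_comm]
        gcongr
        · exact sq_eLpNorm_two_le_of_eq_zero_off (G.measurableSet_of_mem_tree (hF hQ))
            fun x hx => eq_zero_of_mdiff_eq (hΔ Q (hF hQ)) hx
        · exact enorm_setAverage_le f Q
    _ ≤ 4 * ∫⁻ x, ‖f x‖ₑ ^ 2 ∂μ :=
        (G.isLaminar_tree.mono hF).sum_mul_laverage_sq_le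
          (fun Q hQ => G.measurableSet_of_mem_tree (hF hQ))
          (fun Q hQ => (G.measure_lt_top_of_mem_tree (hF hQ)).ne)
          (fun P hP => hC.sum_le hF (hF hP)) hf.1.enorm hfQ
    _ = (2 * eLpNorm f 2 μ) ^ 2 := by
        rw [mul_pow, sq_eLpNorm_two_eq_lintegral]
        norm_num

end IsCarleson

end MartingaleGrid

/-- Dyadic paraproduct boundedness: if `Δ_Q b_Q = b_Q` and the Carleson condition
`sup_P μ(P)⁻¹ Σ_{Q ⊆ P} ‖b_Q‖_∞² μ(Q) ≤ 1` holds, then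
`Πf = Σ_Q ⟨f⟩_Q b_Q` is bounded on `L²(μ)` with an absolute constant. -/
theorem paraproduct_L2_bound :
    ∃ C : ℝ, 0 < C ∧
      ∀ (Ω : Type) (_ : MeasurableSpace Ω) (μ : Measure Ω), SigmaFinite μ →
        ∀ (G : MartingaleGrid Ω μ) (b : Set Ω → Ω → ℝ),
          (∀ Q ∈ G.tree, Integrable (b Q) μ) →
          (∀ Q ∈ G.tree, G.mdiff Q (b Q) = b Q) →
          (∀ P ∈ G.tree,
            ∑' Q : {Q | Q ∈ G.tree ∧ Q ⊆ P},
              (eLpNorm (b Q.1) ⊤ μ) ^ 2 * μ (Q.1 : Set Ω) ≤ μ P) →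
          ∀ f : Ω → ℝ, MemLp f 2 μ →
            eLpNorm (fun x => ∑' Q : G.tree, (⨍ y in (Q : Set Ω), f y ∂μ) * b Q x) 2 μ
              ≤ ENNReal.ofReal C * eLpNorm f 2 μ := by
  refine ⟨2, two_pos, fun Ω _ μ _ G b hint hΔ hC f hf => ?_⟩
  rw [ENNReal.ofReal_ofNat]
  have : Countable G.tree := G.countable_tree.to_subtype
  refine eLpNorm_tsum_le_of_forall_finset ENNReal.ofNat_ne_top
    (fun Q : G.tree => (hint Q Q.2).aestronglyMeasurable.const_mul _) fun s => ?_
  have hs : ↑(s.map (Function.Embedding.subtype _)) ⊆ G.tree := by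
    intro Q hQ
    obtain ⟨q, -, rfl⟩ := Finset.mem_map.1 hQ
    exact q.2
  simpa [Finset.sum_map] using MartingaleGrid.IsCarleson.eLpNorm_sum_setAverage_mul_le hC
    (fun Q hQ => (hint Q hQ).aestronglyMeasurable) hΔ hf hs
end
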